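/- With the notation above, if L is a system of generators of the homogeneous ideal J ⊆ B, then the set L' ∪ H generates the kernel I_J of φ: S → R, where L' = {f^{(k)} : f ∈ L, 0 ≤ k ≤ deg f} and H = {x_i y_j − x_j y_i : 1 ≤ i < j ≤ n}. -/

import Mathlib

open MvPolynomial

/-- The "tail" of size `m` of an exponent vector `u` on the variables `x_1 < … < x_n`:
if `u` corresponds to the ordered monomial `x_{i_1} ⋯ x_{i_d}` (`i_1 ≤ … ≤ i_d`), then
`tailWeight n u m` corresponds to `x_{i_{d-m+1}} ⋯ x_{i_d}`. -/
noncomputable def tailWeight (n : ℕ) (u : Fin n →₀ ℕ) (m : ℕ) : Fin n →₀ ℕ :=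
  Finsupp.onFinset u.support
    (fun j => min (u j) (m - ∑ l ∈ Finset.univ.filter (fun l => j < l), u l))
    (by
      intro j h
      rw [Finsupp.mem_support_iff]
      intro h0
      apply h
      simp [h0])

/-- For `f = Σ_u a_u x^u ∈ B = k[x_1,…,x_n]` and `m : ℕ`, the polynomial
`f^{(m)} = Σ_u a_u x^{u - tail(u,m)} y^{tail(u,m)} ∈ S = k[x_1,…,x_n,y_1,…,y_n]`
obtained by replacing in each ordered monomial the last `m` variables by the
corresponding `y`-variables (`inl i ↦ x_i`, `inr i ↦ y_i`). -/
noncomputable def reesLift {k : Type*} [Field k] {n : ℕ}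
    (f : MvPolynomial (Fin n) k) (m : ℕ) : MvPolynomial (Fin n ⊕ Fin n) k :=
  ∑ u ∈ f.support,
    MvPolynomial.monomial
      (Finsupp.mapDomain Sum.inl (u - tailWeight n u m) +
        Finsupp.mapDomain Sum.inr (tailWeight n u m)) (f.coeff u)

/-!
Write `μ : S → B` for the substitution `x_i, y_i ↦ x_i`. Modulo the minors `x_i y_j - x_j y_i` a
monomial of `S` only depends on its image under `μ` and on its `y`-degree (exchange an `x_j y_i`
for an `x_i y_j` until the `y`-parts agree). Hence a polynomial `h` all of whose monomials have
`y`-degree `min m (deg)` is congruent to `μ(h)^{(m)}`.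

The Rees map sends the `y`-degree-`d` component `g_d` of `g` to `μ(g_d) t^d`, so `g ∈ I_J` exactly
when every `μ(g_d)` lies in `J`. Writing `μ(g_d) = Σ a_i f_i` with `f_i ∈ L` homogeneous of degree
`e_i`, each `(a_i f_i)^{(d)}` is congruent to `a_i^{(d - min d e_i)} f_i^{(min d e_i)}`, a multiple
of a generator from `L'`.
-/

section Minors

open Finsupp (single sub_add_single_one_cancel)

variable {σ R : Type*} [CommRing R]

theorem monomial_sumElim_add_single_inr (a b : σ →₀ ℕ) (l : σ) (c : R) :
    monomial (a.sumElim (b + single l 1)) c =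
      monomial (a.sumElim b) c * X (Sum.inr l) := by
  rw [← add_zero a, Finsupp.sumElim_add, Finsupp.sumElim_zero_single, add_zero,
    monomial_add_single, pow_one]

theorem monomial_sumElim_add_single_inl (a b : σ →₀ ℕ) (l : σ) (c : R) :
    monomial ((a + single l 1).sumElim b) c =
      monomial (a.sumElim b) c * X (Sum.inl l) := by
  rw [← add_zero b, Finsupp.sumElim_add, Finsupp.sumElim_single_zero, add_zero,
    monomial_add_single, pow_one]

variable (σ R) [LinearOrder σ]

noncomputable def minorsIdeal : Ideal (MvPolynomial (σ ⊕ σ) R) :=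
  Ideal.span {g | ∃ i j : σ, i < j ∧
    g = X (Sum.inl i) * X (Sum.inr j) - X (Sum.inl j) * X (Sum.inr i)}

variable {σ R}

theorem X_inl_mul_X_inr_sub_mem_minorsIdeal (i j : σ) :
    (X (Sum.inl i) * X (Sum.inr j) - X (Sum.inl j) * X (Sum.inr i) :
      MvPolynomial (σ ⊕ σ) R) ∈ minorsIdeal σ R := by
  rcases lt_trichotomy i j with hij | rfl | hji
  · exact Ideal.subset_span ⟨i, j, hij, rfl⟩
  · rw [sub_self]; exact zero_mem _
  · rw [← neg_sub]
    exact neg_mem (Ideal.subset_span ⟨j, i, hji, rfl⟩)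

theorem monomial_sumElim_swap_sub_mem_minorsIdeal (a b : σ →₀ ℕ) (j l : σ) (c : R) :
    monomial ((a + single j 1).sumElim (b + single l 1)) c -
      monomial ((a + single l 1).sumElim (b + single j 1)) c ∈ minorsIdeal σ R := by
  simp only [monomial_sumElim_add_single_inr, monomial_sumElim_add_single_inl]
  rw [show ∀ p x y z w : MvPolynomial (σ ⊕ σ) R, p * x * y - p * z * w =
    -(p * (z * w - x * y)) by intros; ring]
  exact neg_mem (Ideal.mul_mem_left _ _ (X_inl_mul_X_inr_sub_mem_minorsIdeal l j))

theorem exists_monomial_sumElim_sub_mem_minorsIdeal_of_ne_zero (c : R) {a b : σ →₀ ℕ} {l : σ}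
    (hl : (a + b) l ≠ 0) (hb : b.degree ≠ 0) :
    ∃ a' b' : σ →₀ ℕ, a' + b' = a + b ∧ b'.degree = b.degree ∧ b' l ≠ 0 ∧
      monomial (a'.sumElim b') c - monomial (a.sumElim b) c ∈ minorsIdeal σ R := by
  by_cases hbl : b l = 0
  · have hal : a l ≠ 0 := by simpa [hbl] using hl
    obtain ⟨j, hj⟩ : ∃ j, b j ≠ 0 := by
      by_contra! hb'
      exact hb ((Finsupp.degree_eq_zero_iff b).mpr (Finsupp.ext hb'))
    obtain ⟨a₀, rfl⟩ : ∃ a₀, a = a₀ + single l 1 := ⟨_, (sub_add_single_one_cancel hal).symm⟩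
    obtain ⟨b₀, rfl⟩ : ∃ b₀, b = b₀ + single j 1 := ⟨_, (sub_add_single_one_cancel hj).symm⟩
    refine ⟨a₀ + single j 1, b₀ + single l 1, by abel, ?_, by simp,
      monomial_sumElim_swap_sub_mem_minorsIdeal a₀ b₀ j l c⟩
    simp only [map_add, Finsupp.degree_single]
  · exact ⟨a, b, rfl, rfl, hbl, by rw [sub_self]; exact zero_mem _⟩

theorem monomial_sumElim_sub_mem_minorsIdeal (c : R) {a b a' b' : σ →₀ ℕ}
    (hsum : a + b = a' + b') (hdeg : b.degree = b'.degree) :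
    monomial (a.sumElim b) c - monomial (a'.sumElim b') c ∈ minorsIdeal σ R := by
  induction h : b.degree generalizing a b a' b' with
  | zero =>
    obtain rfl : b = 0 := (Finsupp.degree_eq_zero_iff b).mp h
    obtain rfl : b' = 0 := (Finsupp.degree_eq_zero_iff b').mp (hdeg ▸ h)
    rw [add_zero, add_zero] at hsum
    rw [hsum, sub_self]
    exact zero_mem _
  | succ e ih =>
    obtain ⟨l, hl⟩ : ∃ l, b l ≠ 0 := by
      by_contra! hb
      rw [(Finsupp.degree_eq_zero_iff b).mpr (Finsupp.ext hb)] at h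
      exact Nat.succ_ne_zero e h.symm
    have hl' : (a' + b') l ≠ 0 := by
      rw [← hsum, Finsupp.add_apply]
      omega
    obtain ⟨a'', b'', hsum', hdeg', hl'', hswap⟩ :=
      exists_monomial_sumElim_sub_mem_minorsIdeal_of_ne_zero c hl' (by omega)
    -- `b` and `b''` both contain `y_l`; cancelling it lowers the `y`-degree
    obtain ⟨b₀, rfl⟩ : ∃ b₀, b = b₀ + single l 1 := ⟨_, (sub_add_single_one_cancel hl).symm⟩
    obtain ⟨b₀'', rfl⟩ : ∃ b₀'', b'' = b₀'' + single l 1 :=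
      ⟨_, (sub_add_single_one_cancel hl'').symm⟩
    have hcancel : monomial (a.sumElim (b₀ + single l 1)) c -
        monomial (a''.sumElim (b₀'' + single l 1)) c ∈ minorsIdeal σ R := by
      rw [monomial_sumElim_add_single_inr, monomial_sumElim_add_single_inr, ← sub_mul]
      refine Ideal.mul_mem_right _ _ (ih ?_ ?_ ?_)
      · rw [← add_assoc] at hsum hsum'
        exact add_right_cancel (hsum.trans hsum'.symm)
      · simp only [map_add, Finsupp.degree_single] at h hdeg hdeg'
        omega
      · simp only [map_add, Finsupp.degree_single] at h
        omega
    rw [← sub_add_sub_cancel _ (monomial (a''.sumElim (b₀'' + single l 1)) c)]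
    exact add_mem hcancel hswap

end Minors

section Grading

variable {σ R : Type*} [CommSemiring R]

theorem aeval_C_X_mul_X_pow_weight_monomial (w : σ → ℕ) (v : σ →₀ ℕ) (c : R) :
    aeval (fun i => Polynomial.C (X i) * Polynomial.X ^ w i) (monomial v c) =
      Polynomial.C (monomial v c) * Polynomial.X ^ Finsupp.weight w v := by
  induction v using Finsupp.induction with
  | zero => simp [Polynomial.algebraMap_apply, MvPolynomial.algebraMap_eq]
  | single_add i e v _ _ ih =>
    rw [monomial_single_add, map_mul, ih, map_pow, aeval_X, map_add, Finsupp.weight_single,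
      map_mul, map_pow, smul_eq_mul]
    ring

theorem coeff_aeval_C_X_mul_X_pow_weight (w : σ → ℕ) (p : MvPolynomial σ R) (d : ℕ) :
    (aeval (fun i => Polynomial.C (X i) * Polynomial.X ^ w i) p).coeff d =
      weightedHomogeneousComponent w d p := by
  classical
  induction p using MvPolynomial.induction_on' with
  | monomial v c =>
    rw [aeval_C_X_mul_X_pow_weight_monomial, Polynomial.coeff_C_mul_X_pow,
      weightedHomogeneousComponent_of_mem (isWeightedHomogeneous_monomial w v c rfl)]
  | add p q hp hq => rw [map_add, Polynomial.coeff_add, hp, hq, map_add]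

end Grading

section YDegree

variable {σ R A : Type*} [CommSemiring R] [CommSemiring A] [Algebra R A]

def yWeight (σ : Type*) : σ ⊕ σ → ℕ := Sum.elim 0 1

theorem weight_yWeight_sumElim (a b : σ →₀ ℕ) :
    Finsupp.weight (yWeight σ) (a.sumElim b) = b.degree := by
  simp [Finsupp.weight_apply, yWeight, Finsupp.degree_apply, Finsupp.sum]

theorem degree_sumElim (a b : σ →₀ ℕ) : (a.sumElim b).degree = a.degree + b.degree := by
  rw [Finsupp.sumElim_eq_add, map_add, Finsupp.degree_mapDomain, Finsupp.degree_mapDomain]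

theorem weight_yWeight_le_degree (v : σ ⊕ σ →₀ ℕ) :
    Finsupp.weight (yWeight σ) v ≤ v.degree := by
  rw [← Finsupp.comapDomain_sumElim_comapDomain v, weight_yWeight_sumElim, degree_sumElim]
  exact Nat.le_add_left _ _

theorem rename_sumElim_id_id_monomial_sumElim (a b : σ →₀ ℕ) (c : R) :
    rename (Sum.elim id id) (monomial (a.sumElim b) c) = monomial (a + b) c := by
  rw [rename_monomial, Finsupp.sumElim_eq_add, Finsupp.mapDomain_add, ← Finsupp.mapDomain_comp,
    ← Finsupp.mapDomain_comp, Sum.elim_comp_inl, Sum.elim_comp_inr, Finsupp.mapDomain_id,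
    Finsupp.mapDomain_id]

theorem coeff_aeval_sumElim_C_C_mul_X (x : σ → A) (g : MvPolynomial (σ ⊕ σ) R) (d : ℕ) :
    (aeval (Sum.elim (fun i => Polynomial.C (x i))
      (fun i => Polynomial.C (x i) * Polynomial.X)) g).coeff d =
      aeval x (rename (Sum.elim id id) (weightedHomogeneousComponent (yWeight σ) d g)) := by
  have hfactor : aeval (Sum.elim (fun i => Polynomial.C (x i))
      (fun i => Polynomial.C (x i) * Polynomial.X)) =
      (Polynomial.mapAlgHom ((aeval x).comp (rename (R := R) (Sum.elim id id)))).comp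
        (aeval fun i => Polynomial.C (X i) * Polynomial.X ^ yWeight σ i) := by
    apply MvPolynomial.algHom_ext
    rintro (i | i) <;> simp [yWeight]
  rw [hfactor, AlgHom.comp_apply, Polynomial.coe_mapAlgHom, Polynomial.coeff_map,
    coeff_aeval_C_X_mul_X_pow_weight]
  rfl

end YDegree

section ReesMap

variable {σ R : Type*} [CommRing R] (J : Ideal (MvPolynomial σ R))

noncomputable def reesMap : MvPolynomial (σ ⊕ σ) R →ₐ[R] Polynomial (MvPolynomial σ R ⧸ J) :=
  aeval (Sum.elim (fun i => Polynomial.C (Ideal.Quotient.mk J (X i)))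
    (fun i => Polynomial.C (Ideal.Quotient.mk J (X i)) * Polynomial.X))

theorem coeff_reesMap (g : MvPolynomial (σ ⊕ σ) R) (d : ℕ) :
    (reesMap J g).coeff d =
      Ideal.Quotient.mk J
        (rename (Sum.elim id id) (weightedHomogeneousComponent (yWeight σ) d g)) := by
  rw [reesMap, coeff_aeval_sumElim_C_C_mul_X]
  exact DFunLike.congr_fun (aeval_unique (Ideal.Quotient.mkₐ R J)).symm _

theorem minorsIdeal_le_ker_reesMap [LinearOrder σ] :
    minorsIdeal σ R ≤ RingHom.ker (reesMap J) := by
  rw [minorsIdeal, Ideal.span_le]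
  rintro _ ⟨i, j, -, rfl⟩
  simp only [SetLike.mem_coe, RingHom.mem_ker, reesMap, map_sub, map_mul, aeval_X,
    Sum.elim_inl, Sum.elim_inr]
  ring

end ReesMap

theorem Finset.sum_min_tsub_sum_gt {ι : Type*} [LinearOrder ι] (s : Finset ι) (u : ι → ℕ)
    (m : ℕ) :
    ∑ j ∈ s, min (u j) (m - ∑ l ∈ s with j < l, u l) = min m (∑ j ∈ s, u j) := by
  induction s using Finset.induction_on_min with
  | empty => simp
  | insert a s ha ih =>
    have has : a ∉ s := fun h => lt_irrefl a (ha a h)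
    have hgt_a : {l ∈ insert a s | a < l} = s := by
      ext l
      simp only [Finset.mem_filter, Finset.mem_insert]
      exact ⟨fun ⟨hl, hal⟩ => hl.resolve_left (ne_of_gt hal), fun hl => ⟨Or.inr hl, ha l hl⟩⟩
    have hgt_j : ∑ j ∈ s, min (u j) (m - ∑ l ∈ insert a s with j < l, u l) =
        ∑ j ∈ s, min (u j) (m - ∑ l ∈ s with j < l, u l) :=
      Finset.sum_congr rfl fun j hj => by
        rw [Finset.filter_insert, if_neg (not_lt_of_gt (ha j hj))]
    rw [Finset.sum_insert has, Finset.sum_insert has, hgt_a, hgt_j, ih]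
    omega

section ReesLift

variable {n : ℕ}

theorem tailWeight_le (u : Fin n →₀ ℕ) (m : ℕ) : tailWeight n u m ≤ u :=
  fun _ => min_le_left _ _

theorem degree_tailWeight (u : Fin n →₀ ℕ) (m : ℕ) :
    (tailWeight n u m).degree = min m u.degree := by
  rw [Finsupp.degree_eq_sum, Finsupp.degree_eq_sum]
  exact Finset.sum_min_tsub_sum_gt Finset.univ u m

noncomputable def reesExponent (u : Fin n →₀ ℕ) (m : ℕ) : Fin n ⊕ Fin n →₀ ℕ :=
  (u - tailWeight n u m).sumElim (tailWeight n u m)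

theorem degree_reesExponent (u : Fin n →₀ ℕ) (m : ℕ) : (reesExponent u m).degree = u.degree := by
  rw [reesExponent, degree_sumElim, ← map_add, tsub_add_cancel_of_le (tailWeight_le u m)]

theorem weight_yWeight_reesExponent (u : Fin n →₀ ℕ) (m : ℕ) :
    Finsupp.weight (yWeight (Fin n)) (reesExponent u m) = min m u.degree := by
  rw [reesExponent, weight_yWeight_sumElim, degree_tailWeight]

variable {k : Type*} [Field k]

theorem reesLift_eq_sum (f : MvPolynomial (Fin n) k) (m : ℕ) :
    reesLift f m = ∑ u ∈ f.support, monomial (reesExponent u m) (f.coeff u) := by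
  simp only [reesLift, reesExponent, Finsupp.sumElim_eq_add]

theorem reesLift_add (f g : MvPolynomial (Fin n) k) (m : ℕ) :
    reesLift (f + g) m = reesLift f m + reesLift g m := by
  simp only [reesLift_eq_sum, ← MvPolynomial.sum_def, AddMonoidAlgebra.coeff_add]
  exact Finsupp.sum_add_index' (fun _ => map_zero _) fun _ _ _ => map_add _ _ _

theorem reesLift_sum {ι : Type*} (s : Finset ι) (f : ι → MvPolynomial (Fin n) k) (m : ℕ) :
    reesLift (∑ i ∈ s, f i) m = ∑ i ∈ s, reesLift (f i) m :=
  map_sum (AddMonoidHom.mk' (reesLift · m) fun f g => reesLift_add f g m) f s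

theorem reesLift_monomial (u : Fin n →₀ ℕ) (c : k) (m : ℕ) :
    reesLift (monomial u c) m = monomial (reesExponent u m) c := by
  classical
  rcases eq_or_ne c 0 with rfl | hc
  · simp [reesLift_eq_sum]
  · rw [reesLift_eq_sum, support_monomial, if_neg hc, Finset.sum_singleton, coeff_monomial,
      if_pos rfl]

theorem rename_reesLift (f : MvPolynomial (Fin n) k) (m : ℕ) :
    rename (Sum.elim id id) (reesLift f m) = f := by
  induction f using MvPolynomial.induction_on' with
  | monomial u c =>
    rw [reesLift_monomial, reesExponent, rename_sumElim_id_id_monomial_sumElim,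
      tsub_add_cancel_of_le (tailWeight_le u m)]
  | add f g hf hg => rw [reesLift_add, map_add, hf, hg]

theorem support_reesLift_subset (f : MvPolynomial (Fin n) k) (m : ℕ) :
    (reesLift f m).support ⊆ f.support.image (reesExponent · m) := by
  classical
  intro v hv
  rw [reesLift_eq_sum] at hv
  obtain ⟨u, hu, hv⟩ := Finset.mem_biUnion.mp (support_sum hv)
  exact Finset.mem_image.mpr ⟨u, hu, (Finset.mem_singleton.mp (support_monomial_subset hv)).symm⟩

theorem isWeightedHomogeneous_reesLift {f : MvPolynomial (Fin n) k} {e m : ℕ}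
    (hf : f.IsHomogeneous e) (hm : m ≤ e) :
    (reesLift f m).IsWeightedHomogeneous (yWeight (Fin n)) m := by
  intro v hv
  obtain ⟨u, hu, rfl⟩ := Finset.mem_image.mp (support_reesLift_subset f m (mem_support_iff.mpr hv))
  rw [weight_yWeight_reesExponent, Finsupp.degree_apply, ← hf.degree_eq_sum_deg_support hu]
  exact min_eq_left hm

theorem reesMap_reesLift_eq_zero (J : Ideal (MvPolynomial (Fin n) k)) {f : MvPolynomial (Fin n) k}
    {e m : ℕ} (hf : f.IsHomogeneous e) (hm : m ≤ e) (hfJ : f ∈ J) :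
    reesMap J (reesLift f m) = 0 := by
  ext d
  rw [coeff_reesMap, weightedHomogeneousComponent_of_mem (isWeightedHomogeneous_reesLift hf hm),
    Polynomial.coeff_zero]
  split_ifs
  · rw [rename_reesLift, Ideal.Quotient.eq_zero_iff_mem.mpr hfJ]
  · simp

end ReesLift

section ReesLiftCongruence

variable {n : ℕ} {k : Type*} [Field k]

theorem monomial_sub_reesLift_rename_mem_minorsIdeal {v : Fin n ⊕ Fin n →₀ ℕ} {m : ℕ} (c : k)
    (hv : Finsupp.weight (yWeight (Fin n)) v = min m v.degree) :
    monomial v c - reesLift (rename (Sum.elim id id) (monomial v c)) m ∈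
      minorsIdeal (Fin n) k := by
  obtain ⟨a, b, rfl⟩ : ∃ a b : Fin n →₀ ℕ, v = a.sumElim b :=
    ⟨_, _, (Finsupp.comapDomain_sumElim_comapDomain v).symm⟩
  rw [weight_yWeight_sumElim, degree_sumElim, ← map_add] at hv
  rw [rename_sumElim_id_id_monomial_sumElim, reesLift_monomial]
  exact monomial_sumElim_sub_mem_minorsIdeal c
    (tsub_add_cancel_of_le (tailWeight_le _ _)).symm (by rw [degree_tailWeight, hv])

theorem sub_reesLift_rename_mem_minorsIdeal {h : MvPolynomial (Fin n ⊕ Fin n) k} {m : ℕ}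
    (hh : ∀ v ∈ h.support, Finsupp.weight (yWeight (Fin n)) v = min m v.degree) :
    h - reesLift (rename (Sum.elim id id) h) m ∈ minorsIdeal (Fin n) k := by
  rw [as_sum h, map_sum, reesLift_sum, ← Finset.sum_sub_distrib]
  exact Ideal.sum_mem _ fun v hv => monomial_sub_reesLift_rename_mem_minorsIdeal _ (hh v hv)

theorem reesLift_mul_sub_mem_minorsIdeal {f : MvPolynomial (Fin n) k} {e : ℕ}
    (hf : f.IsHomogeneous e) (a : MvPolynomial (Fin n) k) (d : ℕ) :
    reesLift (a * f) d - reesLift a (d - min d e) * reesLift f (min d e) ∈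
      minorsIdeal (Fin n) k := by
  classical
  have hrename : rename (Sum.elim id id) (reesLift a (d - min d e) * reesLift f (min d e)) =
      a * f := by
    rw [map_mul, rename_reesLift, rename_reesLift]
  have hsupp : ∀ v ∈ (reesLift a (d - min d e) * reesLift f (min d e)).support,
      Finsupp.weight (yWeight (Fin n)) v = min d v.degree := by
    intro v hv
    obtain ⟨v₁, hv₁, v₂, hv₂, rfl⟩ := Finset.mem_add.mp (support_mul _ _ hv)
    obtain ⟨u₁, -, rfl⟩ := Finset.mem_image.mp (support_reesLift_subset a _ hv₁)
    obtain ⟨u₂, hu₂, rfl⟩ := Finset.mem_image.mp (support_reesLift_subset f _ hv₂)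
    have hu₂e : u₂.degree = e := (hf.degree_eq_sum_deg_support hu₂).symm
    rw [map_add, map_add, weight_yWeight_reesExponent, weight_yWeight_reesExponent,
      degree_reesExponent, degree_reesExponent, hu₂e]
    omega
  rw [← neg_sub, ← hrename]
  exact neg_mem (sub_reesLift_rename_mem_minorsIdeal hsupp)

theorem reesLift_mem_of_mem_span {L : Set (MvPolynomial (Fin n) k)}
    (hLhom : ∀ f ∈ L, ∃ e, f.IsHomogeneous e) {Q : Ideal (MvPolynomial (Fin n ⊕ Fin n) k)}
    (hminors : minorsIdeal (Fin n) k ≤ Q) (hL : ∀ f ∈ L, ∀ m ≤ f.totalDegree, reesLift f m ∈ Q)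
    {p : MvPolynomial (Fin n) k} (hp : p ∈ Ideal.span L) (d : ℕ) : reesLift p d ∈ Q := by
  obtain ⟨N, a, f, rfl⟩ := Submodule.mem_span_set'.mp hp
  rw [reesLift_sum]
  refine Ideal.sum_mem _ fun i _ => ?_
  obtain ⟨e, he⟩ := hLhom _ (f i).2
  have hfQ : reesLift (f i) (min d e) ∈ Q := by
    rcases eq_or_ne (f i : MvPolynomial (Fin n) k) 0 with hf0 | hf0
    · simp [hf0, reesLift_eq_sum]
    · exact hL _ (f i).2 _ ((min_le_right d e).trans (he.totalDegree hf0).ge)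
  rw [smul_eq_mul, ← sub_add_cancel (reesLift _ d)
    (reesLift (a i) (d - min d e) * reesLift (f i) (min d e))]
  exact add_mem (hminors (reesLift_mul_sub_mem_minorsIdeal he _ _)) (Ideal.mul_mem_left _ _ hfQ)

theorem ker_reesMap_le (J : Ideal (MvPolynomial (Fin n) k))
    {Q : Ideal (MvPolynomial (Fin n ⊕ Fin n) k)} (hminors : minorsIdeal (Fin n) k ≤ Q)
    (hJ : ∀ p ∈ J, ∀ d, reesLift p d ∈ Q) : RingHom.ker (reesMap J) ≤ Q := by
  intro g hg
  rw [← sum_weightedHomogeneousComponent (yWeight (Fin n)) g,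
    finsum_eq_sum _ (weightedHomogeneousComponent_finsupp g)]
  refine Ideal.sum_mem _ fun d _ => ?_
  set g_d := weightedHomogeneousComponent (yWeight (Fin n)) d g
  have hg_d : rename (Sum.elim id id) g_d ∈ J := Ideal.Quotient.eq_zero_iff_mem.mp <| by
    rw [← coeff_reesMap, RingHom.mem_ker.mp hg, Polynomial.coeff_zero]
  have hsupp : ∀ v ∈ g_d.support, Finsupp.weight (yWeight (Fin n)) v = min d v.degree := by
    classical
    intro v hv
    rw [support_weightedHomogeneousComponent, Finset.mem_filter] at hv
    rw [hv.2, min_eq_left (hv.2 ▸ weight_yWeight_le_degree v)]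
  rw [← sub_add_cancel g_d (reesLift (rename (Sum.elim id id) g_d) d)]
  exact add_mem (hminors (sub_reesLift_rename_mem_minorsIdeal hsupp)) (hJ _ hg_d d)

end ReesLiftCongruence

/-- Proposition `kernel`, generation part: if `L` is a system of homogeneous
generators of the homogeneous ideal `J ⊆ B = k[x_1,…,x_n]`, then
`L' ∪ H` generates the kernel `I_J` of `φ : S → R ⊆ A[t]`, where
`L' = {f^{(m)} : f ∈ L, 0 ≤ m ≤ deg f}` and `H = {x_i y_j − x_j y_i : i < j}`. -/
theorem kernel_rees_presentation_generators
    (k : Type*) [Field k] (n : ℕ) (J : Ideal (MvPolynomial (Fin n) k))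
    (L : Set (MvPolynomial (Fin n) k))
    (hLhom : ∀ f ∈ L, ∃ d : ℕ, f.IsHomogeneous d)
    (hJL : J = Ideal.span L)
    (φ : MvPolynomial (Fin n ⊕ Fin n) k →ₐ[k]
      Polynomial (MvPolynomial (Fin n) k ⧸ J))
    (hφ : φ = aeval (Sum.elim
      (fun i => Polynomial.C (Ideal.Quotient.mk J (X i)))
      (fun i => Polynomial.C (Ideal.Quotient.mk J (X i)) * Polynomial.X))) :
    RingHom.ker (φ : MvPolynomial (Fin n ⊕ Fin n) k →+*
        Polynomial (MvPolynomial (Fin n) k ⧸ J)) =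
      Ideal.span
        ({g | ∃ f ∈ L, ∃ m ≤ f.totalDegree, g = reesLift f m} ∪
          {g | ∃ i j : Fin n, i < j ∧
            g = X (Sum.inl i) * X (Sum.inr j) - X (Sum.inl j) * X (Sum.inr i)}) := by
  obtain rfl : φ = reesMap J := hφ
  refine le_antisymm (ker_reesMap_le J (Ideal.span_mono Set.subset_union_right) fun p hp d => ?_) ?_
  · refine reesLift_mem_of_mem_span hLhom (Ideal.span_mono Set.subset_union_right)
      (fun f hf m hm => ?_) (hJL ▸ hp) d
    exact Ideal.subset_span (Or.inl ⟨f, hf, m, hm, rfl⟩)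
  · rw [Ideal.span_le]
    rintro g (⟨f, hf, m, hm, rfl⟩ | hg)
    · obtain ⟨e, he⟩ := hLhom f hf
      exact reesMap_reesLift_eq_zero J he (hm.trans he.totalDegree_le)
        (hJL ▸ Ideal.subset_span hf)
    · exact minorsIdeal_le_ker_reesMap J (Ideal.subset_span hg)
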